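/- In the symmetric group S₁₀, the permutations σ₁ = (1 2 3 4 5 6), σ₂ = (1 7 8 3 5 9), σ₃ = (2 10 8 7 6 5), σ₄ = (1 9 4 3 8 10) each have cycle structure [1,1,1,1,6], satisfy σ₁·σ₂·σ₃·σ₄ = identity, and the subgroup they generate acts transitively on {1,…,10}. Hence there exists a transitive product-one tuple in S₁₀ of length 4 with ramification type [[1⁴,6]⁴]. -/

import Mathlib

/-- Cycle structure of a permutation of `Fin d`, including fixed points as 1-cycles. -/
def fullCycleType {d : ℕ} (σ : Equiv.Perm (Fin d)) : Multiset ℕ :=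
  σ.cycleType + Multiset.replicate (d - σ.cycleType.sum) 1

/-- Product of a list of permutations, composed left-to-right
(apply the first permutation first). -/
def seqProd {d : ℕ} (l : List (Equiv.Perm (Fin d))) : Equiv.Perm (Fin d) :=
  l.foldr (fun σ acc => σ.trans acc) (Equiv.refl (Fin d))


def σ1 : Equiv.Perm (Fin 10) := c[0, 1, 2, 3, 4, 5]

def σ2 : Equiv.Perm (Fin 10) := c[0, 6, 7, 2, 4, 8]

def σ3 : Equiv.Perm (Fin 10) := c[1, 9, 7, 6, 5, 4]

def σ4 : Equiv.Perm (Fin 10) := c[0, 8, 3, 2, 7, 9]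

theorem fullCycleType_formPerm {d : ℕ} (l : List (Fin d)) (hl : l.Nodup) (hn : 2 ≤ l.length) :
    fullCycleType l.formPerm = l.length ::ₘ Multiset.replicate (d - l.length) 1 := by
  have hsupp : l.formPerm.support = l.toFinset :=
    List.support_formPerm_of_nodup l hl fun x hx => by simp [hx] at hn
  rw [fullCycleType, (List.isCycle_formPerm hl hn).cycleType, hsupp, List.card_toFinset,
    hl.dedup, Multiset.sum_singleton, Multiset.singleton_add]

theorem fullCycleType_formPerm_of_length_eq_six (l : List (Fin 10)) (hl : l.Nodup)
    (hn : l.length = 6) : fullCycleType l.formPerm = ({1, 1, 1, 1, 6} : Multiset ℕ) := by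
  rw [fullCycleType_formPerm l hl (by omega), hn]
  decide

theorem fullCycleType_σ (i : Fin 4) :
    fullCycleType (![σ1, σ2, σ3, σ4] i) = ({1, 1, 1, 1, 6} : Multiset ℕ) := by
  fin_cases i <;> exact fullCycleType_formPerm_of_length_eq_six _ (by decide) rfl

set_option maxRecDepth 4000 in
theorem seqProd_σ : seqProd [σ1, σ2, σ3, σ4] = Equiv.refl (Fin 10) := by
  decide

theorem Subgroup.exists_mem_apply_eq_of_base {α : Type*} {H : Subgroup (Equiv.Perm α)} (a : α)
    (h : ∀ x, ∃ g ∈ H, g a = x) (x y : α) : ∃ g ∈ H, g x = y := by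
  obtain ⟨g, hg, rfl⟩ := h x
  obtain ⟨k, hk, rfl⟩ := h y
  exact ⟨k * g⁻¹, H.mul_mem hk (H.inv_mem hg), by simp⟩

-- The powers of `σ1` reach `0, …, 5`, those of `σ2` reach `6, 7, 8`, and `σ3` sends `1` to `9`.
theorem exists_mem_apply_zero_eq {H : Subgroup (Equiv.Perm (Fin 10))}
    (h1 : σ1 ∈ H) (h2 : σ2 ∈ H) (h3 : σ3 ∈ H) (x : Fin 10) : ∃ g ∈ H, g 0 = x := by
  fin_cases x
  · exact ⟨1, H.one_mem, rfl⟩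
  · exact ⟨σ1, h1, by decide⟩
  · exact ⟨σ1 ^ 2, H.pow_mem h1 2, by decide⟩
  · exact ⟨σ1 ^ 3, H.pow_mem h1 3, by decide⟩
  · exact ⟨σ1 ^ 4, H.pow_mem h1 4, by decide⟩
  · exact ⟨σ1 ^ 5, H.pow_mem h1 5, by decide⟩
  · exact ⟨σ2, h2, by decide⟩
  · exact ⟨σ2 ^ 2, H.pow_mem h2 2, by decide⟩
  · exact ⟨σ2 ^ 5, H.pow_mem h2 5, by decide⟩
  · exact ⟨σ3 * σ1, H.mul_mem h3 h1, by decide⟩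

theorem exists_mem_apply_eq_of_σ_mem {H : Subgroup (Equiv.Perm (Fin 10))}
    (h1 : σ1 ∈ H) (h2 : σ2 ∈ H) (h3 : σ3 ∈ H) (x y : Fin 10) : ∃ g ∈ H, g x = y :=
  Subgroup.exists_mem_apply_eq_of_base 0 (exists_mem_apply_zero_eq h1 h2 h3) x y

theorem stmt12 :
    (fullCycleType σ1 = ({1, 1, 1, 1, 6} : Multiset ℕ) ∧ fullCycleType σ2 = ({1, 1, 1, 1, 6} : Multiset ℕ) ∧ fullCycleType σ3 = ({1, 1, 1, 1, 6} : Multiset ℕ) ∧ fullCycleType σ4 = ({1, 1, 1, 1, 6} : Multiset ℕ)) ∧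
    seqProd [σ1, σ2, σ3, σ4] = Equiv.refl (Fin 10) ∧
    (∀ x y : Fin 10, ∃ g ∈ Subgroup.closure ({σ1, σ2, σ3, σ4} : Set (Equiv.Perm (Fin 10))), g x = y) ∧
    (∃ τ : Fin 4 → Equiv.Perm (Fin 10),
      (∀ i, fullCycleType (τ i) = ({1, 1, 1, 1, 6} : Multiset ℕ)) ∧
      seqProd (List.ofFn τ) = Equiv.refl (Fin 10) ∧
      (∀ x y : Fin 10, ∃ g ∈ Subgroup.closure (Set.range τ), g x = y)) := by
  refine ⟨⟨fullCycleType_σ 0, fullCycleType_σ 1, fullCycleType_σ 2, fullCycleType_σ 3⟩,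
    seqProd_σ, exists_mem_apply_eq_of_σ_mem (Subgroup.subset_closure (by simp))
      (Subgroup.subset_closure (by simp)) (Subgroup.subset_closure (by simp)),
    ![σ1, σ2, σ3, σ4], fullCycleType_σ, seqProd_σ,
    exists_mem_apply_eq_of_σ_mem (Subgroup.subset_closure ⟨0, rfl⟩)
      (Subgroup.subset_closure ⟨1, rfl⟩) (Subgroup.subset_closure ⟨2, rfl⟩)⟩
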